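/- arXiv:2502.18241 — 6 statements merged into one kernel-verified Lean document; each statement's English description precedes it below -/
import Mathlib

section
/- Let D = {d_1, ..., d_M} be a set of M real antenna positions and a(θ) ∈ ℂ^M the steering vector with m-th entry exp(iπ d_m sin θ). For angles θ_k, θ_i, θ_j, letting ⊗ denote the Kronecker product and x* the entrywise complex conjugate of x, one has |(a(θ_k)* ⊗ a(θ_k))^H (a(θ_j)* ⊗ a(θ_i))|² / (‖a(θ_k)* ⊗ a(θ_k)‖² ‖a(θ_j)* ⊗ a(θ_i)‖²) = G(Δ_ki; D) · G(−Δ_kj; D), where Δ_ki = sin θ_k − sin θ_i and Δ_kj = sin θ_k − sin θ_j; i.e., the Type II inter-user-interference beam pattern of the virtual array factors as the product of two physical beam patterns. -/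
open Finset

/-- Steering vector: `m`-th entry `exp(i π d_m sin θ)`. -/
noncomputable def steer (M : ℕ) (d : Fin M → ℝ) (θ : ℝ) : Fin M → ℂ :=
  fun m => Complex.exp (Complex.I * Real.pi * (d m) * Real.sin θ)

/-- Kronecker product of two `M`-vectors, indexed by pairs. -/
def kron {M : ℕ} (x y : Fin M → ℂ) : Fin M × Fin M → ℂ :=
  fun p => x p.1 * y p.2

/-- Beam pattern `G(Δ; D) = (1/M²) |Σ_m exp(iπ d_m Δ)|²`. -/
noncomputable def G (M : ℕ) (d : Fin M → ℝ) (Δ : ℝ) : ℝ :=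
  (1 / (M : ℝ) ^ 2) * (norm (∑ m, Complex.exp (Complex.I * Real.pi * (d m) * Δ))) ^ 2

/-!
The Hermitian inner product of two Kronecker products is the product of the inner
products of the factors, and the inner product of two steering vectors is the array factor
`Σ_m exp(iπ d_m Δ)` at the difference `Δ` of the sines. Every entry of a steering vector has
modulus one, so both virtual vectors have squared norm `M²`, which supplies the `1/M²` of each
beam pattern; finally `|Σ_m exp(iπ d_m Δ)|` is even in `Δ`, its value at `-Δ` being the conjugate.
-/

section Kronecker

variable {M : ℕ} (x y u v : Fin M → ℂ)

theorem sum_conj_kron_mul_kron :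
    ∑ p, (starRingEnd ℂ) (kron x y p) * kron u v p =
      (∑ a, (starRingEnd ℂ) (x a) * u a) * ∑ b, (starRingEnd ℂ) (y b) * v b := by
  rw [Fintype.sum_prod_type, sum_mul_sum]
  refine sum_congr rfl fun a _ => sum_congr rfl fun b _ => ?_
  simp only [kron, map_mul]
  ring

theorem sum_norm_kron_sq :
    ∑ p, ‖kron x y p‖ ^ 2 = (∑ a, ‖x a‖ ^ 2) * ∑ b, ‖y b‖ ^ 2 := by
  simp only [kron, norm_mul, mul_pow, Fintype.sum_prod_type, sum_mul_sum]

end Kronecker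

noncomputable def arrayFactor {M : ℕ} (d : Fin M → ℝ) (Δ : ℝ) : ℂ :=
  ∑ m, Complex.exp (Complex.I * Real.pi * (d m) * Δ)

theorem G_eq_norm_arrayFactor_sq (M : ℕ) (d : Fin M → ℝ) (Δ : ℝ) :
    G M d Δ = (1 / (M : ℝ) ^ 2) * ‖arrayFactor d Δ‖ ^ 2 :=
  rfl

theorem conj_arrayFactor {M : ℕ} (d : Fin M → ℝ) (Δ : ℝ) :
    (starRingEnd ℂ) (arrayFactor d Δ) = arrayFactor d (-Δ) := by
  simp only [arrayFactor, map_sum, ← Complex.exp_conj, map_mul, Complex.conj_I,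
    Complex.conj_ofReal, Complex.ofReal_neg]
  refine sum_congr rfl fun m _ => ?_
  ring_nf

theorem norm_arrayFactor_neg {M : ℕ} (d : Fin M → ℝ) (Δ : ℝ) :
    ‖arrayFactor d (-Δ)‖ = ‖arrayFactor d Δ‖ := by
  rw [← conj_arrayFactor, Complex.norm_conj]

section Steering

variable (M : ℕ) (d : Fin M → ℝ)

theorem norm_steer (θ : ℝ) (m : Fin M) : ‖steer M d θ m‖ = 1 := by
  rw [steer, Complex.norm_exp]
  simp

theorem sum_norm_steer_sq (θ : ℝ) : ∑ m, ‖steer M d θ m‖ ^ 2 = M := by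
  simp [norm_steer]

theorem steer_mul_conj_steer (θ θ' : ℝ) (m : Fin M) :
    steer M d θ m * (starRingEnd ℂ) (steer M d θ' m) =
      Complex.exp (Complex.I * Real.pi * (d m) * ((Real.sin θ - Real.sin θ' : ℝ) : ℂ)) := by
  simp only [steer, ← Complex.exp_conj, ← Complex.exp_add, map_mul, Complex.conj_I,
    Complex.conj_ofReal, Complex.ofReal_sub]
  ring_nf

theorem sum_steer_mul_conj_steer (θ θ' : ℝ) :
    ∑ m, steer M d θ m * (starRingEnd ℂ) (steer M d θ' m) =
      arrayFactor d (Real.sin θ - Real.sin θ') := by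
  simp only [steer_mul_conj_steer, arrayFactor]

theorem sum_conj_steer_mul_steer (θ θ' : ℝ) :
    ∑ m, (starRingEnd ℂ) (steer M d θ m) * steer M d θ' m =
      arrayFactor d (Real.sin θ' - Real.sin θ) := by
  simp only [mul_comm ((starRingEnd ℂ) _), sum_steer_mul_conj_steer]

theorem sum_norm_kron_conj_steer_steer_sq (θ θ' : ℝ) :
    ∑ p, ‖kron (fun m => (starRingEnd ℂ) (steer M d θ m)) (steer M d θ') p‖ ^ 2 =
      (M : ℝ) ^ 2 := by
  rw [sum_norm_kron_sq]
  simp only [Complex.norm_conj, sum_norm_steer_sq]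
  ring

end Steering

theorem typeII_IUI_beam_pattern_factors_general (M : ℕ) (d : Fin M → ℝ)
    (θk θi θj : ℝ) :
    (norm (∑ p : Fin M × Fin M,
        (starRingEnd ℂ) (kron (fun m => (starRingEnd ℂ) (steer M d θk m)) (steer M d θk) p) *
          kron (fun m => (starRingEnd ℂ) (steer M d θj m)) (steer M d θi) p)) ^ 2 /
      ((∑ p : Fin M × Fin M,
          norm (kron (fun m => (starRingEnd ℂ) (steer M d θk m)) (steer M d θk) p) ^ 2) *
        (∑ p : Fin M × Fin M,
          norm (kron (fun m => (starRingEnd ℂ) (steer M d θj m)) (steer M d θi) p) ^ 2)) =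
    G M d (Real.sin θk - Real.sin θi) * G M d (-(Real.sin θk - Real.sin θj)) := by
  have inner_eq : ∑ p : Fin M × Fin M,
      (starRingEnd ℂ) (kron (fun m => (starRingEnd ℂ) (steer M d θk m)) (steer M d θk) p) *
        kron (fun m => (starRingEnd ℂ) (steer M d θj m)) (steer M d θi) p =
      arrayFactor d (Real.sin θk - Real.sin θj) * arrayFactor d (Real.sin θi - Real.sin θk) := by
    rw [sum_conj_kron_mul_kron, sum_conj_steer_mul_steer]
    simp only [Complex.conj_conj, sum_steer_mul_conj_steer]
  rw [inner_eq, sum_norm_kron_conj_steer_steer_sq, sum_norm_kron_conj_steer_steer_sq,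
    G_eq_norm_arrayFactor_sq, G_eq_norm_arrayFactor_sq, norm_arrayFactor_neg,
    ← norm_arrayFactor_neg d (Real.sin θk - Real.sin θi), neg_sub, norm_mul]
  ring

/-- the Type II IUI beam pattern of the virtual array factors as
`G(Δ_ki; D) · G(−Δ_kj; D)`. -/
theorem typeII_IUI_beam_pattern_factors (M : ℕ) (hM : 0 < M) (d : Fin M → ℝ)
    (θk θi θj : ℝ) :
    (norm (∑ p : Fin M × Fin M,
        (starRingEnd ℂ) (kron (fun m => (starRingEnd ℂ) (steer M d θk m)) (steer M d θk) p) *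
          kron (fun m => (starRingEnd ℂ) (steer M d θj m)) (steer M d θi) p)) ^ 2 /
      ((∑ p : Fin M × Fin M,
          norm (kron (fun m => (starRingEnd ℂ) (steer M d θk m)) (steer M d θk) p) ^ 2) *
        (∑ p : Fin M × Fin M,
          norm (kron (fun m => (starRingEnd ℂ) (steer M d θj m)) (steer M d θi) p) ^ 2)) =
    G M d (Real.sin θk - Real.sin θi) * G M d (-(Real.sin θk - Real.sin θj)) :=
  typeII_IUI_beam_pattern_factors_general M d θk θi θj
end

section
/- Let N1 ≥ 1 and N2 ≥ 1 be integers and let D_na = {0, 1, ..., N1−1} ∪ {(m+1)(N1+1)−1 : 0 ≤ m ≤ N2−1} be the two-level nested array position set. Define f(Δ) = sin(πN1Δ/2)/sin(πΔ/2), g(Δ) = sin(π(N1+1)N2Δ/2)/sin(π(N1+1)Δ/2), and Φ(Δ) = π(N1+1)N2Δ/2. Then for every real Δ with sin(πΔ/2) ≠ 0 and sin(π(N1+1)Δ/2) ≠ 0, |Σ_{d∈D_na} exp(iπ d Δ)|² = f(Δ)² + g(Δ)² + 2 f(Δ) g(Δ) cos(Φ(Δ)). -/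
/-! Split the positions into the filled segment `{0, …, N1 - 1}` and the sparse segment
`N1 + m (N1 + 1)`, `m < N2`. Each segment is a geometric series of unit phasors, and
`2 i sin s = e^{is} - e^{-is}` telescopes it into a phase times a Dirichlet-kernel ratio:
with `s₁ = πΔ/2`, the two segments sum to `e^{i(N1-1)s₁} f` and `e^{i((N1-1)s₁ + Φ)} g`.
Two real amplitudes with phase gap `Φ` have squared modulus `f² + g² + 2 f g cos Φ`. -/

open Finset

/-- Two-level nested array position set:
`{0, 1, ..., N1−1} ∪ {(m+1)(N1+1)−1 : 0 ≤ m ≤ N2−1}`. -/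
def Dna (N1 N2 : ℕ) : Finset ℕ :=
  Finset.range N1 ∪ (Finset.range N2).image (fun m => (m + 1) * (N1 + 1) - 1)

theorem sum_Dna {M : Type*} [AddCommMonoid M] (N1 N2 : ℕ) (F : ℕ → M) :
    ∑ d ∈ Dna N1 N2, F d = ∑ k ∈ range N1, F k + ∑ m ∈ range N2, F (N1 + m * (N1 + 1)) := by
  have sparse_eq (m : ℕ) : (m + 1) * (N1 + 1) - 1 = N1 + m * (N1 + 1) := by
    rw [add_one_mul]; omega
  simp only [Dna, sparse_eq]
  rw [sum_union, sum_image]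
  · intro a _ b _ hab
    exact Nat.eq_of_mul_eq_mul_right N1.succ_pos (Nat.add_left_cancel hab)
  · simp only [disjoint_left, mem_range, mem_image, not_exists, not_and]
    omega

open Complex

theorem sum_range_exp_mul_sin (n : ℕ) (s : ℂ) :
    (∑ k ∈ range n, exp (2 * k * s * I)) * sin s = exp ((n - 1) * s * I) * sin (n * s) := by
  have step (k : ℕ) : exp (2 * k * s * I) * (2 * sin s) =
      (exp ((2 * k - 1) * s * I) - exp ((2 * (k + 1 : ℕ) - 1) * s * I)) * I := by
    rw [two_sin, ← mul_assoc, mul_sub, ← exp_add, ← exp_add]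
    push_cast; ring_nf
  have telescope : (∑ k ∈ range n, exp (2 * k * s * I)) * (2 * sin s) =
      (exp (-s * I) - exp ((2 * n - 1) * s * I)) * I := by
    rw [sum_mul, sum_congr rfl fun k _ => step k, ← sum_mul,
      sum_range_sub' (fun k : ℕ => exp ((2 * k - 1) * s * I))]
    push_cast; ring_nf
  have rhs_eq : exp ((n - 1) * s * I) * (2 * sin (n * s)) =
      (exp (-s * I) - exp ((2 * n - 1) * s * I)) * I := by
    rw [two_sin, ← mul_assoc, mul_sub, ← exp_add, ← exp_add]
    ring_nf
  apply mul_right_cancel₀ (two_ne_zero : (2 : ℂ) ≠ 0)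
  linear_combination telescope - rhs_eq

theorem sum_range_exp_eq_mul_div_sin (n : ℕ) {s : ℂ} (hs : sin s ≠ 0) :
    ∑ k ∈ range n, exp (2 * k * s * I) = exp ((n - 1) * s * I) * (sin (n * s) / sin s) := by
  rw [eq_comm, ← mul_div_assoc, div_eq_iff hs, sum_range_exp_mul_sin]

theorem norm_exp_mul_add_exp_mul_sq (a φ f g : ℝ) :
    ‖exp (a * I) * f + exp ((a + φ) * I) * g‖ ^ 2 = f ^ 2 + g ^ 2 + 2 * f * g * Real.cos φ := by
  have factor : exp (a * I) * f + exp ((a + φ) * I) * g = exp (a * I) * (f + exp (φ * I) * g) := by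
    rw [add_mul, exp_add]; ring
  rw [factor, norm_mul, norm_exp_ofReal_mul_I, one_mul, Complex.sq_norm, normSq_apply]
  simp only [add_re, ofReal_re, mul_re, exp_ofReal_mul_I_re, exp_ofReal_mul_I_im, ofReal_im,
    mul_zero, sub_zero, add_im, mul_im, zero_add]
  linear_combination g ^ 2 * Real.sin_sq_add_cos_sq φ

theorem nested_array_beam_pattern_general (N1 N2 : ℕ) (Δ : ℝ)
    (h1 : Real.sin (Real.pi * Δ / 2) ≠ 0)
    (h2 : Real.sin (Real.pi * ((N1 : ℝ) + 1) * Δ / 2) ≠ 0) :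
    ‖∑ d ∈ Dna N1 N2, Complex.exp (Complex.I * Real.pi * (d : ℝ) * Δ)‖ ^ 2 =
      (Real.sin (Real.pi * (N1 : ℝ) * Δ / 2) / Real.sin (Real.pi * Δ / 2)) ^ 2 +
      (Real.sin (Real.pi * ((N1 : ℝ) + 1) * (N2 : ℝ) * Δ / 2) /
          Real.sin (Real.pi * ((N1 : ℝ) + 1) * Δ / 2)) ^ 2 +
      2 * (Real.sin (Real.pi * (N1 : ℝ) * Δ / 2) / Real.sin (Real.pi * Δ / 2)) *
        (Real.sin (Real.pi * ((N1 : ℝ) + 1) * (N2 : ℝ) * Δ / 2) /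
          Real.sin (Real.pi * ((N1 : ℝ) + 1) * Δ / 2)) *
        Real.cos (Real.pi * ((N1 : ℝ) + 1) * (N2 : ℝ) * Δ / 2) := by
  set s₁ : ℝ := Real.pi * Δ / 2
  set s₂ : ℝ := Real.pi * ((N1 : ℝ) + 1) * Δ / 2
  have hs₁ : sin (s₁ : ℂ) ≠ 0 := by exact_mod_cast h1
  have hs₂ : sin (s₂ : ℂ) ≠ 0 := by exact_mod_cast h2
  have hs₂₁ : (s₂ : ℂ) = (N1 + 1) * s₁ := by push_cast [s₁, s₂]; ring
  have phasor (d : ℕ) : exp (I * Real.pi * (d : ℝ) * Δ) = exp (2 * d * s₁ * I) := by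
    push_cast [s₁]; ring_nf
  have sparse_phasor (m : ℕ) : exp (2 * (N1 + m * (N1 + 1) : ℕ) * s₁ * I) =
      exp (2 * N1 * s₁ * I) * exp (2 * m * s₂ * I) := by
    rw [← exp_add, hs₂₁]; push_cast; ring_nf
  rw [sum_congr rfl fun d _ => phasor d, sum_Dna, sum_congr rfl fun m _ => sparse_phasor m,
    ← mul_sum, sum_range_exp_eq_mul_div_sin N1 hs₁, sum_range_exp_eq_mul_div_sin N2 hs₂,
    show Real.pi * N1 * Δ / 2 = N1 * s₁ by ring,
    show Real.pi * (N1 + 1) * N2 * Δ / 2 = N2 * s₂ by ring,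
    ← norm_exp_mul_add_exp_mul_sq ((N1 - 1) * s₁) (N2 * s₂), ← mul_assoc, ← exp_add]
  push_cast
  rw [hs₂₁]
  ring_nf

/-- the squared modulus of the nested-array sum equals
`f(Δ)² + g(Δ)² + 2 f(Δ) g(Δ) cos(Φ(Δ))` where
`f(Δ) = sin(πN1Δ/2)/sin(πΔ/2)`, `g(Δ) = sin(π(N1+1)N2Δ/2)/sin(π(N1+1)Δ/2)`,
`Φ(Δ) = π(N1+1)N2Δ/2`. -/
theorem nested_array_beam_pattern (N1 N2 : ℕ) (hN1 : 1 ≤ N1) (hN2 : 1 ≤ N2) (Δ : ℝ)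
    (h1 : Real.sin (Real.pi * Δ / 2) ≠ 0)
    (h2 : Real.sin (Real.pi * ((N1 : ℝ) + 1) * Δ / 2) ≠ 0) :
    ‖∑ d ∈ Dna N1 N2, Complex.exp (Complex.I * Real.pi * (d : ℝ) * Δ)‖ ^ 2 =
      (Real.sin (Real.pi * (N1 : ℝ) * Δ / 2) / Real.sin (Real.pi * Δ / 2)) ^ 2 +
      (Real.sin (Real.pi * ((N1 : ℝ) + 1) * (N2 : ℝ) * Δ / 2) /
          Real.sin (Real.pi * ((N1 : ℝ) + 1) * Δ / 2)) ^ 2 +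
      2 * (Real.sin (Real.pi * (N1 : ℝ) * Δ / 2) / Real.sin (Real.pi * Δ / 2)) *
        (Real.sin (Real.pi * ((N1 : ℝ) + 1) * (N2 : ℝ) * Δ / 2) /
          Real.sin (Real.pi * ((N1 : ℝ) + 1) * Δ / 2)) *
        Real.cos (Real.pi * ((N1 : ℝ) + 1) * (N2 : ℝ) * Δ / 2) :=
  nested_array_beam_pattern_general N1 N2 Δ h1 h2
end

section
/- Let M1 < M2 be coprime positive integers and let D_cp = {m M2 : 0 ≤ m ≤ 2M1−1} ∪ {m M1 : 1 ≤ m ≤ M2−1} be the co-prime array position set. Define I1(Δ) = sin(πM1M2Δ)/sin(πM2Δ/2), I2(Δ) = sin(πM1(M2−1)Δ/2)/sin(πM1Δ/2), and Φ(Δ) = π(M1−1)M2Δ/2. Then for every real Δ with sin(πM2Δ/2) ≠ 0 and sin(πM1Δ/2) ≠ 0, |Σ_{d∈D_cp} exp(iπ d Δ)|² = I1(Δ)² + I2(Δ)² + 2 I1(Δ) I2(Δ) cos(Φ(Δ)). -/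
/-!
The co-prime array is the disjoint union (disjoint because `gcd(M1, M2) = 1`) of two arithmetic
progressions, `m M2` for `m < 2 M1` and `(m + 1) M1` for `m < M2 - 1`. Summed as geometric series,
their steering sums are phasors `e^{iθ} I1` and `e^{iφ} I2` with real Dirichlet-kernel amplitudes,
and `|e^{iθ} a + e^{iφ} b|² = a² + b² + 2ab cos (θ - φ)` with `θ - φ = Φ(Δ)`.
-/

open Finset

/-- Co-prime array position set:
`{m M2 : 0 ≤ m ≤ 2M1−1} ∪ {m M1 : 1 ≤ m ≤ M2−1}`. -/
def Dcp (M1 M2 : ℕ) : Finset ℕ :=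
  (Finset.range (2 * M1)).image (fun m => m * M2) ∪
    (Finset.Icc 1 (M2 - 1)).image (fun m => m * M1)

namespace Complex

theorem exp_two_mul_mul_I_sub_one (z : ℂ) :
    exp (2 * z * I) - 1 = exp (z * I) * (2 * I * sin z) := by
  rw [exp_mul_I, exp_mul_I, cos_two_mul, sin_two_mul]
  linear_combination 2 * sin_sq_add_cos_sq z - 2 * sin z ^ 2 * I_sq

theorem sum_range_exp_add_two_mul_mul_I (N : ℕ) (c x : ℝ) (hx : Real.sin x ≠ 0) :
    ∑ m ∈ range N, exp (↑(c + 2 * m * x) * I) =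
      exp (↑(c + (N - 1) * x) * I) * ↑(Real.sin (N * x) / Real.sin x) := by
  have hsin : sin x ≠ 0 := by exact_mod_cast hx
  have hr : exp (2 * x * I) - 1 ≠ 0 := by
    rw [exp_two_mul_mul_I_sub_one]
    simp [exp_ne_zero, hsin, I_ne_zero]
  have hterm (m : ℕ) : exp (↑(c + 2 * m * x) * I) = exp (c * I) * exp (2 * x * I) ^ m := by
    rw [← exp_nat_mul, ← exp_add]; push_cast; ring_nf
  have hpow : exp (2 * x * I) ^ N = exp (2 * (N * x) * I) := by
    rw [← exp_nat_mul]; ring_nf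
  have hphase : exp (↑(c + (N - 1) * x) * I) = exp (c * I) * exp (N * x * I) / exp (x * I) := by
    rw [eq_div_iff (exp_ne_zero _), ← exp_add, ← exp_add]; push_cast; ring_nf
  rw [sum_congr rfl fun m _ => hterm m, ← mul_sum, geom_sum_eq (sub_ne_zero.mp hr), hpow,
    exp_two_mul_mul_I_sub_one, exp_two_mul_mul_I_sub_one, hphase, ofReal_div, ofReal_sin,
    ofReal_sin, ofReal_mul, ofReal_natCast]
  field_simp

theorem sq_norm_exp_mul_I_add_exp_mul_I (a b θ φ : ℝ) :
    ‖exp (θ * I) * a + exp (φ * I) * b‖ ^ 2 = a ^ 2 + b ^ 2 + 2 * a * b * Real.cos (θ - φ) := by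
  rw [Complex.sq_norm, normSq_apply]
  simp only [exp_mul_I, add_re, add_im, mul_re, mul_im, ← ofReal_cos, ← ofReal_sin, ofReal_re,
    ofReal_im, I_re, I_im, Real.cos_sub]
  linear_combination a ^ 2 * Real.sin_sq_add_cos_sq θ + b ^ 2 * Real.sin_sq_add_cos_sq φ

end Complex

theorem disjoint_image_mul_image_mul_Icc {M1 M2 : ℕ} (hc : M1.Coprime M2) (s : Finset ℕ) :
    Disjoint (s.image (· * M2)) ((Icc 1 (M2 - 1)).image (· * M1)) := by
  simp only [disjoint_left, mem_image, mem_Icc, not_exists, not_and]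
  rintro _ ⟨m, -, rfl⟩ n ⟨hn1, hn2⟩ hnm
  have hdvd : M2 ∣ n := hc.symm.dvd_of_dvd_mul_right ⟨m, by rw [hnm, mul_comm]⟩
  have hle : M2 ≤ n := Nat.le_of_dvd (by omega) hdvd
  omega

theorem Finset.sum_Icc_one_eq_sum_range {M : Type*} [AddCommMonoid M] (f : ℕ → M) (n : ℕ) :
    ∑ m ∈ Icc 1 n, f m = ∑ m ∈ range n, f (m + 1) := by
  rw [range_eq_Ico, sum_Ico_add', zero_add, Ico_add_one_right_eq_Icc]

theorem sum_Dcp {M : Type*} [AddCommMonoid M] {M1 M2 : ℕ} (hc : M1.Coprime M2) (h1 : 0 < M1)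
    (h2 : 0 < M2) (f : ℕ → M) :
    ∑ d ∈ Dcp M1 M2, f d =
      ∑ m ∈ range (2 * M1), f (m * M2) + ∑ m ∈ range (M2 - 1), f ((m + 1) * M1) := by
  rw [Dcp, sum_union (disjoint_image_mul_image_mul_Icc hc _),
    sum_image fun a _ b _ h => Nat.eq_of_mul_eq_mul_right h2 h,
    sum_image fun a _ b _ h => Nat.eq_of_mul_eq_mul_right h1 h, Finset.sum_Icc_one_eq_sum_range]

open Complex

theorem coprime_array_beam_pattern_general (M1 M2 : ℕ)
    (hc : Nat.Coprime M1 M2) (Δ : ℝ)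
    (h1 : Real.sin (Real.pi * (M2 : ℝ) * Δ / 2) ≠ 0)
    (h2 : Real.sin (Real.pi * (M1 : ℝ) * Δ / 2) ≠ 0) :
    (‖(∑ d ∈ Dcp M1 M2, Complex.exp (Complex.I * Real.pi * (d : ℝ) * Δ))‖) ^ 2 =
      (Real.sin (Real.pi * (M1 : ℝ) * (M2 : ℝ) * Δ) / Real.sin (Real.pi * (M2 : ℝ) * Δ / 2)) ^ 2 +
      (Real.sin (Real.pi * (M1 : ℝ) * ((M2 : ℝ) - 1) * Δ / 2) /
          Real.sin (Real.pi * (M1 : ℝ) * Δ / 2)) ^ 2 +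
      2 * (Real.sin (Real.pi * (M1 : ℝ) * (M2 : ℝ) * Δ) /
            Real.sin (Real.pi * (M2 : ℝ) * Δ / 2)) *
        (Real.sin (Real.pi * (M1 : ℝ) * ((M2 : ℝ) - 1) * Δ / 2) /
          Real.sin (Real.pi * (M1 : ℝ) * Δ / 2)) *
        Real.cos (Real.pi * ((M1 : ℝ) - 1) * (M2 : ℝ) * Δ / 2) := by
  have hM1 : 0 < M1 := Nat.pos_of_ne_zero fun h => h2 (by simp [h])
  have hM2 : 0 < M2 := Nat.pos_of_ne_zero fun h => h1 (by simp [h])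
  have hterm₁ (m : ℕ) : exp (I * Real.pi * ((m * M2 : ℕ) : ℝ) * Δ) =
      exp (↑(0 + 2 * m * (Real.pi * M2 * Δ / 2)) * I) := by
    push_cast; ring_nf
  have hterm₂ (m : ℕ) : exp (I * Real.pi * (((m + 1) * M1 : ℕ) : ℝ) * Δ) =
      exp (↑(Real.pi * M1 * Δ + 2 * m * (Real.pi * M1 * Δ / 2)) * I) := by
    push_cast; ring_nf
  have hsum₁ := sum_range_exp_add_two_mul_mul_I (2 * M1) 0 (Real.pi * M2 * Δ / 2) h1
  have hsum₂ :=
    sum_range_exp_add_two_mul_mul_I (M2 - 1) (Real.pi * M1 * Δ) (Real.pi * M1 * Δ / 2) h2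
  rw [sum_Dcp hc hM1 hM2, sum_congr rfl fun m _ => hterm₁ m, sum_congr rfl fun m _ => hterm₂ m,
    hsum₁, hsum₂, sq_norm_exp_mul_I_add_exp_mul_I]
  push_cast [Nat.cast_sub hM2]
  ring_nf

/-- the squared modulus of the co-prime array sum equals
`I1(Δ)² + I2(Δ)² + 2 I1(Δ) I2(Δ) cos(Φ(Δ))` where
`I1(Δ) = sin(πM1M2Δ)/sin(πM2Δ/2)`, `I2(Δ) = sin(πM1(M2−1)Δ/2)/sin(πM1Δ/2)`,
`Φ(Δ) = π(M1−1)M2Δ/2`. -/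
theorem coprime_array_beam_pattern (M1 M2 : ℕ) (h0 : 0 < M1) (h12 : M1 < M2)
    (hc : Nat.Coprime M1 M2) (Δ : ℝ)
    (h1 : Real.sin (Real.pi * (M2 : ℝ) * Δ / 2) ≠ 0)
    (h2 : Real.sin (Real.pi * (M1 : ℝ) * Δ / 2) ≠ 0) :
    (‖(∑ d ∈ Dcp M1 M2, Complex.exp (Complex.I * Real.pi * (d : ℝ) * Δ))‖) ^ 2 =
      (Real.sin (Real.pi * (M1 : ℝ) * (M2 : ℝ) * Δ) / Real.sin (Real.pi * (M2 : ℝ) * Δ / 2)) ^ 2 +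
      (Real.sin (Real.pi * (M1 : ℝ) * ((M2 : ℝ) - 1) * Δ / 2) /
          Real.sin (Real.pi * (M1 : ℝ) * Δ / 2)) ^ 2 +
      2 * (Real.sin (Real.pi * (M1 : ℝ) * (M2 : ℝ) * Δ) /
            Real.sin (Real.pi * (M2 : ℝ) * Δ / 2)) *
        (Real.sin (Real.pi * (M1 : ℝ) * ((M2 : ℝ) - 1) * Δ / 2) /
          Real.sin (Real.pi * (M1 : ℝ) * Δ / 2)) *
        Real.cos (Real.pi * ((M1 : ℝ) - 1) * (M2 : ℝ) * Δ / 2) :=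
  coprime_array_beam_pattern_general M1 M2 hc Δ h1 h2
end

section
/- For every positive integer M and positive reals P, ρ, σ (transmit power, squared channel-gain magnitude |β|², and noise standard deviation), the virtual-array SNR is no larger than the physical-array SNR: 2M²P²ρ² / (2MPρσ² + ((M+1)/M)σ⁴) ≤ MPρ/σ². -/
/-- the virtual-array SNR is no larger than the physical-array SNR:
`2M²P²ρ² / (2MPρσ² + ((M+1)/M)σ⁴) ≤ MPρ/σ²`. -/
theorem snr_vir_le_snr_phy (M : ℕ) (hM : 0 < M) (P ρ σ : ℝ)
    (hP : 0 < P) (hρ : 0 < ρ) (hσ : 0 < σ) :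
    2 * (M : ℝ) ^ 2 * P ^ 2 * ρ ^ 2 /
        (2 * (M : ℝ) * P * ρ * σ ^ 2 + (((M : ℝ) + 1) / (M : ℝ)) * σ ^ 4) ≤
      (M : ℝ) * P * ρ / σ ^ 2 := by
  have hMR : (0:ℝ) < M := by exact_mod_cast hM
  have hden : 0 < 2 * (M : ℝ) * P * ρ * σ ^ 2 + (((M : ℝ) + 1) / (M : ℝ)) * σ ^ 4 := by
    positivity
  rw [div_le_div_iff₀ hden (by positivity)]
  have h1 : (1:ℝ) ≤ M := by exact_mod_cast hM
  have key : 2 * (M : ℝ) ^ 2 * P ^ 2 * ρ ^ 2 * σ ^ 2 ≤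
      (M : ℝ) * P * ρ * (2 * (M : ℝ) * P * ρ * σ ^ 2) := by nlinarith
  nlinarith [mul_pos (mul_pos (mul_pos hMR hP) hρ)
    (mul_pos (div_pos (by linarith : (0:ℝ) < (M:ℝ) + 1) hMR) (pow_pos hσ 4))]
end

section
/- Let N1 ≥ 1 and N2 ≥ 1 be integers and let D_na = {0, 1, ..., N1−1} ∪ {(m+1)(N1+1)−1 : 0 ≤ m ≤ N2−1} be the nested array position set with M = N1 + N2. Then the beam pattern G(Δ; D_na) = (1/M²)|Σ_{d∈D_na} exp(iπ d Δ)|² is strictly decreasing in Δ on the interval (0, 1/((N1+1)N2)]. In particular, the first local minimum point of G(·; D_na) is at least 1/((N1+1)N2). -/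
open Finset

/-- Beam pattern of the nested array (`M = N1 + N2`). -/
noncomputable def Gna (N1 N2 : ℕ) (Δ : ℝ) : ℝ :=
  (1 / ((N1 : ℝ) + (N2 : ℝ)) ^ 2) *
    ‖∑ d ∈ Dna N1 N2, Complex.exp (Complex.I * Real.pi * (d : ℝ) * Δ)‖ ^ 2

/-!
Expanding the squared modulus, `‖∑_{d ∈ D} exp(iπdΔ)‖² = ∑_{d, e ∈ D} cos(π(d - e)Δ)`.
If every position lies in `[0, L)`, then `|d - e| Δ ≤ 1` for `Δ ≤ 1 / L`, so each term is a
cosine evaluated on `[0, π]`, hence nonincreasing in `Δ > 0`, and strictly decreasing as soon as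
`d ≠ e`. The nested array lies in `[0, (N1 + 1) N2)` and contains the two positions `0` and `N1`.
-/

open Real

noncomputable def arrayGain (D : Finset ℕ) (Δ : ℝ) : ℝ :=
  ‖∑ d ∈ D, Complex.exp (Complex.I * π * (d : ℝ) * Δ)‖ ^ 2

theorem arrayGain_eq_sum_cos (D : Finset ℕ) (Δ : ℝ) :
    arrayGain D Δ = ∑ p ∈ D ×ˢ D, cos (π * ((p.1 : ℝ) - p.2) * Δ) := by
  have hexp : ∀ d : ℕ, Complex.I * π * (d : ℝ) * Δ = ((π * d * Δ : ℝ) : ℂ) * Complex.I := by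
    intro d; push_cast; ring
  simp_rw [arrayGain, hexp, Complex.sq_norm, Complex.normSq_apply, Complex.re_sum,
    Complex.im_sum, Complex.exp_ofReal_mul_I_re, Complex.exp_ofReal_mul_I_im,
    Finset.sum_mul_sum, Finset.sum_product, ← Finset.sum_add_distrib]
  refine Finset.sum_congr rfl fun d _ => Finset.sum_congr rfl fun e _ => ?_
  rw [show π * ((d : ℝ) - e) * Δ = π * d * Δ - π * e * Δ by ring, cos_sub]

theorem cos_pi_mul_eq_cos_pi_mul_abs (a t : ℝ) (ht : 0 ≤ t) :
    cos (π * a * t) = cos (π * |a| * t) := by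
  rw [← cos_abs (π * a * t), abs_mul, abs_mul, abs_of_pos pi_pos, abs_of_nonneg ht]

theorem cos_pi_mul_strictAntiOn {a : ℝ} (ha : a ≠ 0) :
    StrictAntiOn (fun t => cos (π * a * t)) (Set.Icc 0 (1 / |a|)) := by
  intro x hx y hy hxy
  simp only [cos_pi_mul_eq_cos_pi_mul_abs a x hx.1, cos_pi_mul_eq_cos_pi_mul_abs a y hy.1]
  have ha' : 0 < |a| := abs_pos.mpr ha
  have harg : ∀ t ∈ Set.Icc 0 (1 / |a|), π * |a| * t ∈ Set.Icc 0 π := by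
    rintro t ⟨ht0, ht⟩
    refine ⟨by positivity, ?_⟩
    calc π * |a| * t ≤ π * |a| * (1 / |a|) := by gcongr
      _ = π := by field_simp
  exact strictAntiOn_cos (harg x hx) (harg y hy) (by gcongr)

theorem arrayGain_strictAntiOn {D : Finset ℕ} (hD : D.Nontrivial) {L : ℕ} (hL : ∀ d ∈ D, d < L) :
    StrictAntiOn (arrayGain D) (Set.Ioc 0 (1 / (L : ℝ))) := by
  intro x hx y hy hxy
  simp only [arrayGain_eq_sum_cos]
  have hterm : ∀ p ∈ D ×ˢ D, p.1 ≠ p.2 →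
      cos (π * ((p.1 : ℝ) - p.2) * y) < cos (π * ((p.1 : ℝ) - p.2) * x) := by
    rintro ⟨d, e⟩ hp hne
    obtain ⟨hd, he⟩ := Finset.mem_product.mp hp
    have hsub : ((d : ℝ) - e) ≠ 0 := sub_ne_zero.mpr (by exact_mod_cast hne)
    have hdL : (d : ℝ) < L := by exact_mod_cast hL d hd
    have heL : (e : ℝ) < L := by exact_mod_cast hL e he
    have hdiam : |(d : ℝ) - e| ≤ L :=
      (abs_sub_lt_of_nonneg_of_lt d.cast_nonneg hdL e.cast_nonneg heL).le
    have hIoc : Set.Ioc 0 (1 / (L : ℝ)) ⊆ Set.Icc 0 (1 / |(d : ℝ) - e|) := fun t ht =>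
      ⟨ht.1.le, ht.2.trans (one_div_le_one_div_of_le (abs_pos.mpr hsub) hdiam)⟩
    exact cos_pi_mul_strictAntiOn hsub (hIoc hx) (hIoc hy) hxy
  obtain ⟨a, ha, b, hb, hab⟩ := hD
  have hab_mem : (a, b) ∈ D ×ˢ D := Finset.mem_product.mpr ⟨ha, hb⟩
  refine Finset.sum_lt_sum (fun p hp => ?_) ⟨(a, b), hab_mem, hterm _ hab_mem hab⟩
  by_cases hp' : p.1 = p.2
  · simp [hp']
  · exact (hterm p hp hp').le

theorem not_isLocalMin_of_strictAntiOn_Ioc {α β : Type*} [TopologicalSpace α] [LinearOrder α]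
    [OrderTopology α] [DenselyOrdered α] [NoMaxOrder α] [Preorder β] {f : α → β} {a b x : α}
    (hf : StrictAntiOn f (Set.Ioc a b)) (hx : x ∈ Set.Ioo a b) : ¬ IsLocalMin f x := by
  intro hmin
  obtain ⟨y, hfy, hy⟩ :=
    ((hmin.filter_mono nhdsWithin_le_nhds).and (Ioo_mem_nhdsGT hx.2)).exists
  exact (hf ⟨hx.1, hx.2.le⟩ ⟨hx.1.trans hy.1, hy.2.le⟩ hy.1).not_ge hfy

theorem Dna_lt {N1 N2 : ℕ} (hN2 : 1 ≤ N2) : ∀ d ∈ Dna N1 N2, d < (N1 + 1) * N2 := by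
  intro d hd
  simp only [Dna, Finset.mem_union, Finset.mem_range, Finset.mem_image] at hd
  rcases hd with hd | ⟨m, hm, rfl⟩
  · nlinarith
  · have : (m + 1) * (N1 + 1) ≤ N2 * (N1 + 1) := Nat.mul_le_mul_right _ hm
    have : 0 < (m + 1) * (N1 + 1) := by positivity
    rw [mul_comm (N1 + 1)]
    omega

theorem Dna_nontrivial {N1 N2 : ℕ} (hN1 : 1 ≤ N1) (hN2 : 1 ≤ N2) : (Dna N1 N2).Nontrivial := by
  refine ⟨0, ?_, N1, ?_, by omega⟩ <;>
    simp only [Dna, Finset.coe_union, Finset.coe_range, Finset.coe_image, Set.mem_union,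
      Set.mem_Iio, Set.mem_image]
  · exact Or.inl hN1
  · exact Or.inr ⟨0, by omega, by omega⟩

theorem Gna_eq_mul_arrayGain (N1 N2 : ℕ) :
    Gna N1 N2 = fun Δ => 1 / ((N1 : ℝ) + N2) ^ 2 * arrayGain (Dna N1 N2) Δ :=
  rfl

/-- the nested-array beam pattern is strictly decreasing on
`(0, 1/((N1+1)N2)]`; in particular every positive local minimum point is at least
`1/((N1+1)N2)`. -/
theorem nested_beam_pattern_strictAnti (N1 N2 : ℕ) (hN1 : 1 ≤ N1) (hN2 : 1 ≤ N2) :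
    StrictAntiOn (Gna N1 N2) (Set.Ioc 0 (1 / (((N1 : ℝ) + 1) * (N2 : ℝ)))) ∧
      ∀ Δ : ℝ, 0 < Δ → IsLocalMin (Gna N1 N2) Δ →
        1 / (((N1 : ℝ) + 1) * (N2 : ℝ)) ≤ Δ := by
  have hanti : StrictAntiOn (Gna N1 N2) (Set.Ioc 0 (1 / (((N1 : ℝ) + 1) * (N2 : ℝ)))) := by
    have hgain := arrayGain_strictAntiOn (Dna_nontrivial hN1 hN2) (Dna_lt hN2)
    push_cast at hgain
    have hM : (0 : ℝ) < 1 / ((N1 : ℝ) + N2) ^ 2 := by positivity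
    rw [Gna_eq_mul_arrayGain]
    exact (strictMono_mul_left_of_pos hM).comp_strictAntiOn hgain
  refine ⟨hanti, fun Δ hΔ hmin => ?_⟩
  by_contra! hlt
  exact not_isLocalMin_of_strictAntiOn_Ioc hanti ⟨hΔ, hlt⟩ hmin
end

section
/- Let N1 ≥ 1 be an integer and let n be an integer with 1 ≤ n ≤ N1. At Δ = 2n/(N1+1), the inner-subarray sum of the nested array has unit modulus: |Σ_{m=0}^{N1−1} exp(iπ m Δ)| = 1. -/
open Finset

/-! At `Δ = 2n/(N₁+1)` the summands are the powers `w^m` of `w = ζ^n`, where `ζ` is a primitive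
`(N₁+1)`-th root of unity. Since `N₁+1 ∤ n`, `w ≠ 1` is itself an `(N₁+1)`-th root of unity, so the
full geometric sum `∑_{m ≤ N₁} w^m` vanishes and the inner sum equals `-w^{N₁}`, of modulus one. -/

theorem geom_sum_eq_neg_pow_of_pow_succ_eq_one {R : Type*} [Ring R] [NoZeroDivisors R] {w : R}
    {k : ℕ} (hw : w ^ (k + 1) = 1) (hw1 : w ≠ 1) : ∑ m ∈ range k, w ^ m = -w ^ k := by
  have hfull : ∑ m ∈ range (k + 1), w ^ m = 0 := by
    have h := geom_sum_mul w (k + 1)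
    rw [hw, sub_self] at h
    exact (mul_eq_zero.mp h).resolve_right (sub_ne_zero.mpr hw1)
  rw [sum_range_succ] at hfull
  exact eq_neg_of_add_eq_zero_left hfull

theorem norm_geom_sum_eq_one_of_pow_succ_eq_one {K : Type*} [NormedDivisionRing K] {w : K}
    {k : ℕ} (hw : w ^ (k + 1) = 1) (hw1 : w ≠ 1) : ‖∑ m ∈ range k, w ^ m‖ = 1 := by
  have hnorm : ‖w‖ = 1 :=
    (pow_eq_one_iff_of_nonneg (norm_nonneg w) k.succ_ne_zero).mp (by rw [← norm_pow, hw, norm_one])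
  rw [geom_sum_eq_neg_pow_of_pow_succ_eq_one hw hw1, norm_neg, norm_pow, hnorm, one_pow]

theorem Complex.exp_mul_two_div_eq_pow (N n m : ℕ) :
    Complex.exp (Complex.I * Real.pi * (m : ℝ) * (2 * (n : ℝ) / ((N : ℝ) + 1))) =
      (Complex.exp (2 * Real.pi * Complex.I / ((N + 1 : ℕ) : ℂ)) ^ n) ^ m := by
  rw [← pow_mul, ← Complex.exp_nat_mul]
  congr 1
  push_cast
  ring

theorem nested_inner_subarray_unit_modulus_general (N1 : ℕ)
    (n : ℕ) (hn1 : 1 ≤ n) (hn2 : n ≤ N1) :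
    ‖(∑ m ∈ Finset.range N1,
        Complex.exp (Complex.I * Real.pi * (m : ℝ) * (2 * (n : ℝ) / ((N1 : ℝ) + 1))))‖ = 1 := by
  have hζ := Complex.isPrimitiveRoot_exp (N1 + 1) N1.succ_ne_zero
  simp_rw [Complex.exp_mul_two_div_eq_pow N1 n]
  refine norm_geom_sum_eq_one_of_pow_succ_eq_one ?_ ?_
  · rw [pow_right_comm, hζ.pow_eq_one, one_pow]
  · rw [Ne, hζ.pow_eq_one_iff_dvd]
    exact Nat.not_dvd_of_pos_of_lt hn1 (Nat.lt_succ_of_le hn2)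

/-- at `Δ = 2n/(N1+1)` with `1 ≤ n ≤ N1`, the inner-subarray sum of the
nested array has unit modulus. -/
theorem nested_inner_subarray_unit_modulus (N1 : ℕ) (hN1 : 1 ≤ N1)
    (n : ℕ) (hn1 : 1 ≤ n) (hn2 : n ≤ N1) :
    ‖(∑ m ∈ Finset.range N1,
        Complex.exp (Complex.I * Real.pi * (m : ℝ) * (2 * (n : ℝ) / ((N1 : ℝ) + 1))))‖ = 1 :=
  nested_inner_subarray_unit_modulus_general N1 n hn1 hn2
end
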